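/- Let P ∈ ℝ^{2n×2n} be symmetric positive definite. Then there exists a real symplectic matrix S (SJₙSᵀ = Jₙ) and positive reals ν₁,…,νₙ such that SPSᵀ = diag(ν₁I₂, ν₂I₂, …, νₙI₂) (Williamson's theorem). -/

import Mathlib

open Matrix Kronecker Polynomial

/-- The 2×2 symplectic form matrix [[0,1],[-1,0]]. -/
noncomputable def Jb : Matrix (Fin 2) (Fin 2) ℝ := !![0, 1; -1, 0]

/-- Jₙ = Iₙ ⊗ J₁, indexed by pairs (block index, position within block). -/
noncomputable def Jmat (n : ℕ) : Matrix (Fin n × Fin 2) (Fin n × Fin 2) ℝ :=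
  (1 : Matrix (Fin n) (Fin n) ℝ) ⊗ₖ Jb

/-- Block-scalar diagonal matrix diag(σ₁I₂, …, σₙI₂). -/
noncomputable def SigmaD {n : ℕ} (σ : Fin n → ℝ) : Matrix (Fin n × Fin 2) (Fin n × Fin 2) ℝ :=
  Matrix.of fun p q => if p = q then σ p.1 else 0

/-!
Choose `X` with `X P Xᵀ = 1` (write `P = Bᵀ B` and take `X = (B⁻¹)ᵀ`). Then `M = X Jₙ Xᵀ` is an
invertible skew-symmetric matrix, and it suffices to find an orthogonal `Q` and `μ > 0` with
`Qᵀ M Q = diag(μ) Jₙ`: the matrix `S = diag(μ)^{-1/2} Qᵀ X` is then symplectic and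
`S P Sᵀ = diag(μ)⁻¹`.

For this normal form, `A = iM` is Hermitian and `Aᵀ = -A`, so eigenvectors `u, v` of `A` whose
eigenvalues do not sum to zero satisfy `uᵀv = 0`. For an orthonormal eigenbasis `U` this says that
the invertible matrix `UᵀU` only connects eigenvalues `λ` and `-λ`, hence `A` has as many negative
as positive eigenvalues; as none of them vanishes, exactly `n` are negative. If `u` is a unit
eigenvector with eigenvalue `-μ < 0`, then `M` acts as `μ Jb` on the pair `√2 Re u, √2 Im u`, and
the relations `u*v = δ`, `uᵀv = 0` among the chosen eigenvectors make all these real vectors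
orthonormal.
-/

open Finset

lemma SigmaD_eq_diagonal {n : ℕ} (σ : Fin n → ℝ) : SigmaD σ = diagonal fun p => σ p.1 := by
  ext p q
  simp only [SigmaD, of_apply, diagonal_apply]

lemma SigmaD_mul_SigmaD {n : ℕ} (σ τ : Fin n → ℝ) : SigmaD σ * SigmaD τ = SigmaD (σ * τ) := by
  simp [SigmaD_eq_diagonal, diagonal_mul_diagonal]

lemma SigmaD_transpose {n : ℕ} (σ : Fin n → ℝ) : (SigmaD σ)ᵀ = SigmaD σ := by
  rw [SigmaD_eq_diagonal, diagonal_transpose]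

lemma SigmaD_one {n : ℕ} : SigmaD (1 : Fin n → ℝ) = 1 := by
  rw [SigmaD_eq_diagonal]; exact diagonal_one

lemma Jb_transpose : Jbᵀ = -Jb := by
  ext i j; fin_cases i <;> fin_cases j <;> simp [Jb]

lemma Jb_mul_Jb : Jb * Jb = -1 := by
  ext i j; fin_cases i <;> fin_cases j <;> simp [Jb, mul_apply, Fin.sum_univ_two]

lemma Jmat_apply {n : ℕ} (p q : Fin n × Fin 2) :
    Jmat n p q = if p.1 = q.1 then Jb p.2 q.2 else 0 := by
  simp only [Jmat, kroneckerMap_apply, one_apply]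
  split_ifs <;> simp

lemma Jmat_transpose (n : ℕ) : (Jmat n)ᵀ = -Jmat n := by
  rw [Jmat, ← kroneckerMap_transpose, transpose_one, Jb_transpose, ← neg_one_smul ℝ Jb,
    kronecker_smul, neg_one_smul]

lemma isUnit_Jmat (n : ℕ) : IsUnit (Jmat n) := by
  refine IsUnit.of_mul_eq_one (-Jmat n) ?_
  rw [mul_neg, Jmat, ← mul_kronecker_mul, Jb_mul_Jb, one_mul, ← neg_one_smul ℝ 1, kronecker_smul,
    one_kronecker_one, neg_one_smul, neg_neg]

lemma SigmaD_mul_Jmat_apply {n : ℕ} (σ : Fin n → ℝ) (p q : Fin n × Fin 2) :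
    (SigmaD σ * Jmat n) p q = if p.1 = q.1 then σ p.1 * Jb p.2 q.2 else 0 := by
  rw [SigmaD_eq_diagonal, diagonal_mul, Jmat_apply, mul_ite, mul_zero]

lemma Jmat_mul_SigmaD {n : ℕ} (σ : Fin n → ℝ) : Jmat n * SigmaD σ = SigmaD σ * Jmat n := by
  ext p q
  rw [SigmaD_mul_Jmat_apply, SigmaD_eq_diagonal, mul_diagonal, Jmat_apply]
  split_ifs with h <;> simp [h, mul_comm]

lemma SigmaD_mul_SigmaD_mul_Jmat_mul_SigmaD {n : ℕ} (a b : Fin n → ℝ) :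
    SigmaD a * (SigmaD b * Jmat n) * SigmaD a = SigmaD (a * b * a) * Jmat n := by
  rw [← Matrix.mul_assoc, Matrix.mul_assoc _ (Jmat n), Jmat_mul_SigmaD, ← Matrix.mul_assoc,
    SigmaD_mul_SigmaD, SigmaD_mul_SigmaD]

lemma Matrix.card_le_card_of_isUnit {ι K : Type*} [Fintype ι] [DecidableEq ι] [Field K]
    {W : Matrix ι ι K} (hW : IsUnit W) {s t : Finset ι} (hst : ∀ i ∈ s, ∀ j, W i j ≠ 0 → j ∈ t) :
    #s ≤ #t := by
  set Ws := W.submatrix ((↑) : s → ι) id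
  have hrows : LinearIndependent K Ws.row :=
    (linearIndependent_rows_of_isUnit hW).comp _ Subtype.val_injective
  have hsupp : Ws = Ws * diagonal fun j => if j ∈ t then (1 : K) else 0 := by
    ext i j
    by_cases hj : j ∈ t
    · simp [mul_diagonal, hj]
    · simpa [mul_diagonal, hj, Ws] using not_imp_comm.mp (hst i i.2 j) hj
  calc #s = Ws.rank := by rw [hrows.rank_matrix, Fintype.card_coe]
    _ ≤ (diagonal fun j => if j ∈ t then (1 : K) else 0).rank := hsupp ▸ rank_mul_le_right _ _
    _ = #t := by classical rw [rank_diagonal]; simp [Fintype.card_subtype]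

lemma Matrix.dotProduct_eq_zero_of_transpose_eq_neg {ι R : Type*} [Fintype ι] [CommRing R]
    [NoZeroDivisors R] {A : Matrix ι ι R} (hA : Aᵀ = -A) {u v : ι → R} {a b : R}
    (hu : A *ᵥ u = a • u) (hv : A *ᵥ v = b • v) (hab : a + b ≠ 0) : u ⬝ᵥ v = 0 := by
  have h : a * (u ⬝ᵥ v) = -(b * (u ⬝ᵥ v)) :=
    calc a * (u ⬝ᵥ v) = (A *ᵥ u) ⬝ᵥ v := by rw [hu, smul_dotProduct, smul_eq_mul]
      _ = u ⬝ᵥ (Aᵀ *ᵥ v) := by rw [dotProduct_mulVec, vecMul_transpose]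
      _ = -(b * (u ⬝ᵥ v)) := by
        rw [hA, neg_mulVec, dotProduct_neg, hv, dotProduct_smul, smul_eq_mul]
  exact (mul_eq_zero.mp (by linear_combination h)).resolve_left hab

namespace Matrix.IsHermitian

variable {ι : Type*} [Fintype ι] [DecidableEq ι] {A : Matrix ι ι ℂ} (hA : A.IsHermitian)
include hA

lemma mulVec_eigenvectorBasis_eq_ofReal_smul (i : ι) :
    A *ᵥ ⇑(hA.eigenvectorBasis i) = (hA.eigenvalues i : ℂ) • ⇑(hA.eigenvectorBasis i) := by
  rw [hA.mulVec_eigenvectorBasis, Complex.coe_smul]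

lemma card_eigenvalues_pos_eq_card_eigenvalues_neg (hskew : Aᵀ = -A) :
    #{i | 0 < hA.eigenvalues i} = #{i | hA.eigenvalues i < 0} := by
  set U : Matrix ι ι ℂ := (hA.eigenvectorUnitary : Matrix ι ι ℂ)
  have hU : IsUnit U := IsUnit.of_mul_eq_one _ (mem_unitaryGroup_iff.mp hA.eigenvectorUnitary.2)
  have hpair : ∀ i j, (Uᵀ * U) i j ≠ 0 → hA.eigenvalues i + hA.eigenvalues j = 0 := by
    intro i j hij
    by_contra hne
    exact hij (dotProduct_eq_zero_of_transpose_eq_neg hskew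
      (hA.mulVec_eigenvectorBasis_eq_ofReal_smul i) (hA.mulVec_eigenvectorBasis_eq_ofReal_smul j)
      (by exact_mod_cast hne))
  have hW : IsUnit (Uᵀ * U) := ((isUnit_transpose U).mpr hU).mul hU
  apply le_antisymm <;> refine card_le_card_of_isUnit hW fun i hi j hij => ?_ <;>
    simp only [mem_filter, mem_univ, true_and] at hi ⊢ <;> linarith [hpair i j hij]

lemma card_eigenvalues_pos_add_card_eigenvalues_neg (hunit : IsUnit A) :
    #{i | 0 < hA.eigenvalues i} + #{i | hA.eigenvalues i < 0} = Fintype.card ι := by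
  have hne : ∀ i, hA.eigenvalues i ≠ 0 := by
    have h := (isUnit_iff_isUnit_det A).mp hunit |>.ne_zero
    rw [hA.det_eq_prod_eigenvalues, prod_ne_zero_iff] at h
    exact fun i hi => h i (mem_univ i) (by simp [hi])
  rw [← card_univ, ← card_filter_add_card_filter_not (s := univ) (fun i => 0 < hA.eigenvalues i)]
  congr 2
  ext i
  simp only [mem_filter, mem_univ, true_and, not_lt, (hne i).le_iff_lt]

end Matrix.IsHermitian

section Realification

open Complex

variable {ι : Type*} [Fintype ι]

lemma re_dotProduct_re (a b : ι → ℂ) :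
    (re ∘ a) ⬝ᵥ (re ∘ b) = ((star a ⬝ᵥ b).re + (a ⬝ᵥ b).re) / 2 := by
  simp only [dotProduct, re_sum, ← sum_add_distrib, sum_div]
  refine sum_congr rfl fun l _ => ?_
  simp only [Function.comp, Pi.star_apply, mul_re, star_def, conj_re, conj_im]
  ring

lemma im_dotProduct_im (a b : ι → ℂ) :
    (im ∘ a) ⬝ᵥ (im ∘ b) = ((star a ⬝ᵥ b).re - (a ⬝ᵥ b).re) / 2 := by
  simp only [dotProduct, re_sum, ← sum_sub_distrib, sum_div]
  refine sum_congr rfl fun l _ => ?_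
  simp only [Function.comp, Pi.star_apply, mul_re, star_def, conj_re, conj_im]
  ring

lemma re_dotProduct_im (a b : ι → ℂ) :
    (re ∘ a) ⬝ᵥ (im ∘ b) = ((star a ⬝ᵥ b).im + (a ⬝ᵥ b).im) / 2 := by
  simp only [dotProduct, im_sum, ← sum_add_distrib, sum_div]
  refine sum_congr rfl fun l _ => ?_
  simp only [Function.comp, Pi.star_apply, mul_im, star_def, conj_re, conj_im]
  ring

lemma im_dotProduct_re (a b : ι → ℂ) :
    (im ∘ a) ⬝ᵥ (re ∘ b) = ((a ⬝ᵥ b).im - (star a ⬝ᵥ b).im) / 2 := by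
  simp only [dotProduct, im_sum, ← sum_sub_distrib, sum_div]
  refine sum_congr rfl fun l _ => ?_
  simp only [Function.comp, Pi.star_apply, mul_im, star_def, conj_re, conj_im]
  ring

lemma mulVec_re (M : Matrix ι ι ℝ) (x : ι → ℂ) : M *ᵥ (re ∘ x) = re ∘ (M.map (↑) *ᵥ x) := by
  ext l
  simp [mulVec, dotProduct, re_sum]

lemma mulVec_im (M : Matrix ι ι ℝ) (x : ι → ℂ) : M *ᵥ (im ∘ x) = im ∘ (M.map (↑) *ᵥ x) := by
  ext l
  simp [mulVec, dotProduct, im_sum]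

lemma exists_orthogonal_mul_eq_mul_SigmaD_mul_Jmat {n : ℕ}
    (M : Matrix ι ι ℝ) (u : Fin n → ι → ℂ) (μ : Fin n → ℝ)
    (horth : ∀ j k, star (u j) ⬝ᵥ u k = if j = k then 1 else 0)
    (hiso : ∀ j k, u j ⬝ᵥ u k = 0) (heig : ∀ j, M.map (↑) *ᵥ u j = (μ j * I) • u j) :
    ∃ Q : Matrix ι (Fin n × Fin 2) ℝ, Qᵀ * Q = 1 ∧ M * Q = Q * (SigmaD μ * Jmat n) := by
  let v : Fin n × Fin 2 → ι → ℝ := fun p => √2 • ![re ∘ u p.1, im ∘ u p.1] p.2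
  have hsqrt : √2 * √2 = 2 := Real.mul_self_sqrt zero_le_two
  refine ⟨(of v)ᵀ, ?_, ?_⟩
  · ext ⟨j, c⟩ ⟨k, d⟩
    change v (j, c) ⬝ᵥ v (k, d) = _
    rw [one_apply]
    by_cases hjk : j = k <;>
    fin_cases c <;> fin_cases d <;>
    simp [v, re_dotProduct_re, im_dotProduct_im, re_dotProduct_im, im_dotProduct_re, horth, hiso,
      hjk, ← mul_assoc, hsqrt]
  · ext l ⟨k, c⟩
    change (M *ᵥ v (k, c)) l = ∑ p, v p l * (SigmaD μ * Jmat n) p (k, c)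
    rw [Fintype.sum_prod_type]
    fin_cases c <;>
    simp [v, SigmaD_mul_Jmat_apply, Jb, Fin.sum_univ_two, mulVec_smul, mulVec_re, mulVec_im,
      heig] <;>
    ring

end Realification

open Complex in
lemma exists_orthogonal_transpose_mul_mul_eq_SigmaD_mul_Jmat {n : ℕ}
    {M : Matrix (Fin n × Fin 2) (Fin n × Fin 2) ℝ} (hskew : Mᵀ = -M) (hM : IsUnit M) :
    ∃ (Q : Matrix (Fin n × Fin 2) (Fin n × Fin 2) ℝ) (μ : Fin n → ℝ),
      (∀ j, 0 < μ j) ∧ Qᵀ * Q = 1 ∧ Qᵀ * M * Q = SigmaD μ * Jmat n := by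
  set A : Matrix (Fin n × Fin 2) (Fin n × Fin 2) ℂ := I • M.map (↑)
  have hA : A.IsHermitian := by
    ext i j
    have hij := congr_fun₂ hskew j i
    simp only [transpose_apply] at hij
    simp [A, conjTranspose_apply, hij]
  have hAskew : Aᵀ = -A := by
    rw [transpose_smul, ← transpose_map, hskew, Matrix.map_neg _ ofReal_neg, smul_neg]
  have hAunit : IsUnit A := (hM.map ofRealHom.mapMatrix).smul (Units.mk0 I I_ne_zero)
  have hcard : #{i | hA.eigenvalues i < 0} = n := by
    have h := hA.card_eigenvalues_pos_add_card_eigenvalues_neg hAunit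
    rw [hA.card_eigenvalues_pos_eq_card_eigenvalues_neg hAskew, Fintype.card_prod,
      Fintype.card_fin, Fintype.card_fin] at h
    omega
  let e : Fin n ≃ {i // i ∈ ({i | hA.eigenvalues i < 0} : Finset _)} :=
    (Finset.equivFinOfCardEq hcard).symm
  have hneg : ∀ j, hA.eigenvalues (e j) < 0 := fun j => (mem_filter.mp (e j).2).2
  let u : Fin n → Fin n × Fin 2 → ℂ := fun j => ⇑(hA.eigenvectorBasis (e j))
  have heigA : ∀ j, A *ᵥ u j = (hA.eigenvalues (e j) : ℂ) • u j :=
    fun j => hA.mulVec_eigenvectorBasis_eq_ofReal_smul (e j)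
  have horth : ∀ j k, star (u j) ⬝ᵥ u k = if j = k then 1 else 0 := by
    intro j k
    rw [dotProduct_comm, ← EuclideanSpace.inner_eq_star_dotProduct,
      orthonormal_iff_ite.mp hA.eigenvectorBasis.orthonormal]
    simp only [Subtype.val_injective.eq_iff, e.injective.eq_iff]
  have hiso : ∀ j k, u j ⬝ᵥ u k = 0 := fun j k =>
    dotProduct_eq_zero_of_transpose_eq_neg hAskew (heigA j) (heigA k)
      (by exact_mod_cast (add_neg (hneg j) (hneg k)).ne)
  have heig : ∀ j, M.map (↑) *ᵥ u j = ((-hA.eigenvalues (e j) : ℝ) * I) • u j := by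
    intro j
    have h : I • (M.map (↑) *ᵥ u j) = (hA.eigenvalues (e j) : ℂ) • u j := by
      rw [← smul_mulVec]; exact heigA j
    calc M.map (↑) *ᵥ u j = (-I) • I • (M.map (↑) *ᵥ u j) := by rw [smul_smul]; simp
      _ = _ := by rw [h, smul_smul]; push_cast; ring_nf
  obtain ⟨Q, hQ, hMQ⟩ := exists_orthogonal_mul_eq_mul_SigmaD_mul_Jmat M u _ horth hiso heig
  exact ⟨Q, _, fun j => neg_pos.mpr (hneg j), hQ, by rw [mul_assoc, hMQ, ← mul_assoc, hQ, one_mul]⟩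

open scoped MatrixOrder in
lemma Matrix.PosDef.exists_mul_mul_transpose_eq_one {ι : Type*} [Fintype ι] [DecidableEq ι]
    {P : Matrix ι ι ℝ} (hP : P.PosDef) : ∃ X : Matrix ι ι ℝ, X * P * Xᵀ = 1 := by
  obtain ⟨B, rfl⟩ := CStarAlgebra.nonneg_iff_eq_star_mul_self.mp hP.posSemidef.nonneg
  have hB : IsUnit B.det := by
    have h := (isUnit_iff_isUnit_det _).mp hP.isUnit
    rw [det_mul] at h
    exact isUnit_of_mul_isUnit_right h
  refine ⟨(B⁻¹)ᵀ, ?_⟩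
  rw [star_eq_conjTranspose, conjTranspose_eq_transpose_of_trivial]
  calc (B⁻¹)ᵀ * (Bᵀ * B) * (B⁻¹)ᵀᵀ = (B * B⁻¹)ᵀ * (B * B⁻¹) := by
        rw [transpose_transpose, transpose_mul]; simp only [Matrix.mul_assoc]
    _ = 1 := by rw [mul_nonsing_inv _ hB, transpose_one, one_mul]

theorem stmt19 (n : ℕ) (P : Matrix (Fin n × Fin 2) (Fin n × Fin 2) ℝ) (hP : P.PosDef) :
    ∃ (S : Matrix (Fin n × Fin 2) (Fin n × Fin 2) ℝ) (ν : Fin n → ℝ),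
      (∀ j, 0 < ν j) ∧ S * Jmat n * Sᵀ = Jmat n ∧ S * P * Sᵀ = SigmaD ν := by
  obtain ⟨X, hX⟩ := hP.exists_mul_mul_transpose_eq_one
  have hXunit : IsUnit X := IsUnit.of_mul_eq_one (P * Xᵀ) (by rw [← Matrix.mul_assoc, hX])
  have hskew : (X * Jmat n * Xᵀ)ᵀ = -(X * Jmat n * Xᵀ) := by
    rw [transpose_mul, transpose_mul, transpose_transpose, Jmat_transpose]
    simp only [Matrix.mul_neg, Matrix.neg_mul, Matrix.mul_assoc]
  obtain ⟨Q, μ, hμ, hQ, hQM⟩ := exists_orthogonal_transpose_mul_mul_eq_SigmaD_mul_Jmat hskew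
    ((hXunit.mul (isUnit_Jmat n)).mul ((isUnit_transpose X).mpr hXunit))
  set c : Fin n → ℝ := fun j => (√(μ j))⁻¹
  have hc : c * c = μ⁻¹ := funext fun j => by simp [c, ← mul_inv, Real.mul_self_sqrt (hμ j).le]
  have hμ_inv : μ⁻¹ * μ = 1 := funext fun j => inv_mul_cancel₀ (hμ j).ne'
  refine ⟨SigmaD c * Qᵀ * X, μ⁻¹, fun j => inv_pos.mpr (hμ j), ?_, ?_⟩
  · calc SigmaD c * Qᵀ * X * Jmat n * (SigmaD c * Qᵀ * X)ᵀ
        = SigmaD c * (Qᵀ * (X * Jmat n * Xᵀ) * Q) * SigmaD c := by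
          simp only [transpose_mul, transpose_transpose, SigmaD_transpose, Matrix.mul_assoc]
      _ = Jmat n := by
          rw [hQM, SigmaD_mul_SigmaD_mul_Jmat_mul_SigmaD, mul_right_comm, hc,
            hμ_inv, SigmaD_one, Matrix.one_mul]
  · calc SigmaD c * Qᵀ * X * P * (SigmaD c * Qᵀ * X)ᵀ
        = SigmaD c * (Qᵀ * (X * P * Xᵀ) * Q) * SigmaD c := by
          simp only [transpose_mul, transpose_transpose, SigmaD_transpose, Matrix.mul_assoc]
      _ = SigmaD μ⁻¹ := by
          rw [hX, Matrix.mul_one, hQ, Matrix.mul_one, SigmaD_mul_SigmaD, hc]
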